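/- (The function Φ parametrizing the critical Hardy constant.) For every σ ∈ (−1,1) with σ ≠ 0 one has the identity 2 Γ((3−σ)/2) Γ((1+σ)/2) / (Γ(σ/2) Γ((2−σ)/2)) = (1−σ) tan(πσ/2), where Γ is the Gamma function. Moreover, the function Φ : (−1,1] → ℝ defined by Φ(σ) = (1−σ) tan(πσ/2) for σ ∈ (−1,1) and Φ(1) = 2/π is continuous and strictly increasing, satisfies Φ(0) = 0, attains its maximal value 2/π at σ = 1, and Φ(σ) → −∞ as σ → −1⁺. -/

import Mathlib

/-!
The reflection formula `Γ(s) Γ(1 - s) = π / sin (π s)`, after one step of `Γ(s + 1) = s Γ(s)`,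
turns the two Gamma products into `π / cos (πσ/2)` and `π / sin (πσ/2)`.
Writing `cos (πσ/2) = sin (π(1-σ)/2) = (π(1-σ)/2) · sinc (π(1-σ)/2)` gives
`Φ(σ) = (2/π) sin (πσ/2) / sinc (π(1-σ)/2)` on all of `(-1, 1]`, which makes continuity at `σ = 1`
evident. With `t = πσ/2` the derivative is `Φ' = (π/2 - t - sin t cos t) / cos² t`, positive
because `sin t cos t = sin (π - 2t) / 2 < π/2 - t`.
-/

open Real Filter
open scoped Topology

noncomputable section

/-- The function `Φ : (−1,1] → ℝ`, `Φ(σ) = (1−σ) tan(πσ/2)` for `σ ∈ (−1,1)` and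
`Φ(1) = 2/π` (the value by continuity). -/
def PhiFun (σ : ℝ) : ℝ :=
  if σ = 1 then 2 / Real.pi else (1 - σ) * Real.tan (Real.pi * σ / 2)

open Set

lemma sin_mul_cos_lt_pi_div_two_sub {t : ℝ} (ht : t < π / 2) :
    sin t * cos t < π / 2 - t := by
  have h := sin_lt (show 0 < π - 2 * t by linarith)
  rw [sin_pi_sub, sin_two_mul] at h
  linarith

lemma sinc_pos_of_abs_lt {x : ℝ} (hx : |x| < π) : 0 < sinc x := by
  rcases eq_or_ne x 0 with rfl | hx0
  · simp
  rw [sinc_of_ne_zero hx0]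
  rcases hx0.lt_or_gt with hneg | hpos
  · exact div_pos_of_neg_of_neg
      (sin_neg_of_neg_of_neg_pi_lt hneg (by linarith [neg_abs_le x])) hneg
  · exact div_pos (sin_pos_of_pos_of_lt_pi hpos (by linarith [le_abs_self x])) hpos

/-- Valid for every `σ ≠ 1`: at the poles of `Γ` and `tan` both sides take the junk value `0`. -/
lemma gamma_ratio_eq_one_sub_mul_tan {σ : ℝ} (hσ : σ ≠ 1) :
    2 * Gamma ((3 - σ) / 2) * Gamma ((1 + σ) / 2) / (Gamma (σ / 2) * Gamma ((2 - σ) / 2))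
      = (1 - σ) * tan (π * σ / 2) := by
  have hshift : Gamma ((3 - σ) / 2) = (1 - σ) / 2 * Gamma ((1 - σ) / 2) := by
    rw [show (3 - σ) / 2 = (1 - σ) / 2 + 1 by ring,
      Gamma_add_one (div_ne_zero (sub_ne_zero.2 hσ.symm) two_ne_zero)]
  have hnum : Gamma ((1 + σ) / 2) * Gamma ((1 - σ) / 2) = π / cos (π * σ / 2) := by
    rw [show (1 - σ) / 2 = 1 - (1 + σ) / 2 by ring, Gamma_mul_Gamma_one_sub,
      show π * ((1 + σ) / 2) = π * σ / 2 + π / 2 by ring, sin_add_pi_div_two]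
  have hden : Gamma (σ / 2) * Gamma ((2 - σ) / 2) = π / sin (π * σ / 2) := by
    rw [show (2 - σ) / 2 = 1 - σ / 2 by ring, Gamma_mul_Gamma_one_sub, mul_div_assoc]
  calc 2 * Gamma ((3 - σ) / 2) * Gamma ((1 + σ) / 2) / (Gamma (σ / 2) * Gamma ((2 - σ) / 2))
      = (1 - σ) * (Gamma ((1 + σ) / 2) * Gamma ((1 - σ) / 2)) /
          (Gamma (σ / 2) * Gamma ((2 - σ) / 2)) := by rw [hshift]; ring
    _ = (1 - σ) * (π / cos (π * σ / 2) / (π / sin (π * σ / 2))) := by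
      rw [hnum, hden, mul_div_assoc]
    _ = (1 - σ) * tan (π * σ / 2) := by
      rw [div_div_div_cancel_left' _ _ pi_ne_zero, tan_eq_sin_div_cos]

lemma one_sub_mul_tan_eq_div_sinc {σ : ℝ} (hσ : σ ≠ 1) :
    (1 - σ) * tan (π * σ / 2) = 2 / π * sin (π * σ / 2) / sinc (π * (1 - σ) / 2) := by
  have hx : π * (1 - σ) / 2 ≠ 0 := by
    have := sub_ne_zero.2 hσ.symm
    positivity
  rw [sinc_of_ne_zero hx, show π * (1 - σ) / 2 = π / 2 - π * σ / 2 by ring, sin_pi_div_two_sub,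
    tan_eq_sin_div_cos, div_div_eq_mul_div, ← mul_div_assoc]
  congr 1
  field_simp

lemma phiFun_eq_div_sinc (σ : ℝ) :
    PhiFun σ = 2 / π * sin (π * σ / 2) / sinc (π * (1 - σ) / 2) := by
  rcases eq_or_ne σ 1 with rfl | hσ
  · simp [PhiFun]
  · rw [PhiFun, if_neg hσ, one_sub_mul_tan_eq_div_sinc hσ]

lemma phiFun_eventuallyEq {x : ℝ} (hx : x ≠ 1) :
    PhiFun =ᶠ[𝓝 x] fun σ => (1 - σ) * tan (π * σ / 2) :=
  (eventually_ne_nhds hx).mono fun _ hσ => if_neg hσ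

lemma continuousOn_phiFun : ContinuousOn PhiFun (Ioc (-1) 1) := by
  rw [funext phiFun_eq_div_sinc]
  refine ContinuousOn.div (by fun_prop) (continuous_sinc.comp (by fun_prop)).continuousOn ?_
  rintro σ ⟨h₁, h₂⟩
  refine (sinc_pos_of_abs_lt ?_).ne'
  rw [abs_lt]
  constructor <;> nlinarith [pi_pos]

lemma hasDerivAt_one_sub_mul_tan {σ : ℝ} (hc : cos (π * σ / 2) ≠ 0) :
    HasDerivAt (fun σ => (1 - σ) * tan (π * σ / 2))
      ((π / 2 * (1 - σ) - sin (π * σ / 2) * cos (π * σ / 2)) / cos (π * σ / 2) ^ 2) σ := by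
  have hlin : HasDerivAt (fun σ : ℝ => π * σ / 2) (π / 2) σ := by
    simpa using ((hasDerivAt_id σ).const_mul π).div_const 2
  refine (((hasDerivAt_id σ).const_sub 1).mul ((hasDerivAt_tan hc).comp σ hlin)).congr_deriv ?_
  rw [Function.comp_apply, id, tan_eq_sin_div_cos]
  field_simp
  ring

lemma strictMonoOn_phiFun : StrictMonoOn PhiFun (Ioc (-1) 1) := by
  refine strictMonoOn_of_deriv_pos (convex_Ioc _ _) continuousOn_phiFun fun σ hσ => ?_
  rw [interior_Ioc] at hσ
  obtain ⟨h₁, h₂⟩ := hσ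
  have hc : 0 < cos (π * σ / 2) :=
    cos_pos_of_mem_Ioo ⟨by nlinarith [pi_pos], by nlinarith [pi_pos]⟩
  rw [((hasDerivAt_one_sub_mul_tan hc.ne').congr_of_eventuallyEq
    (phiFun_eventuallyEq h₂.ne)).deriv]
  have hkey := sin_mul_cos_lt_pi_div_two_sub (t := π * σ / 2) (by nlinarith [pi_pos])
  exact div_pos (by linarith) (by positivity)

lemma tendsto_one_sub_mul_tan_atBot :
    Tendsto (fun σ => (1 - σ) * tan (π * σ / 2)) (𝓝[>] (-1)) atBot := by
  have harg : Tendsto (fun σ : ℝ => π * σ / 2) (𝓝[>] (-1)) (𝓝[>] (-(π / 2))) := by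
    refine tendsto_nhdsWithin_of_tendsto_nhds_of_eventually_within _ ?_ ?_
    · exact ((continuous_const_mul π).div_const 2).tendsto' (-1) _ (by ring)
        |>.mono_left nhdsWithin_le_nhds
    · filter_upwards [self_mem_nhdsWithin] with σ (hσ : -1 < σ)
      show -(π / 2) < π * σ / 2
      nlinarith [pi_pos]
  have hfactor : Tendsto (fun σ : ℝ => 1 - σ) (𝓝[>] (-1)) (𝓝 2) :=
    (continuous_sub_left 1).tendsto' (-1) 2 (by norm_num) |>.mono_left nhdsWithin_le_nhds
  exact hfactor.pos_mul_atBot two_pos (tendsto_tan_neg_pi_div_two.comp harg)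

/-- The Gamma-function identity
`2 Γ((3−σ)/2) Γ((1+σ)/2) / (Γ(σ/2) Γ((2−σ)/2)) = (1−σ) tan(πσ/2)` for `σ ∈ (−1,1)`, `σ ≠ 0`,
together with the properties of `Φ`: it is continuous and strictly increasing on `(−1,1]`,
vanishes at `0`, attains its maximal value `2/π` at `σ = 1`, and tends to `−∞` as `σ → −1⁺`. -/
theorem phi_properties :
    (∀ σ ∈ Set.Ioo (-1 : ℝ) 1, σ ≠ 0 →
      2 * Real.Gamma ((3 - σ) / 2) * Real.Gamma ((1 + σ) / 2) /
          (Real.Gamma (σ / 2) * Real.Gamma ((2 - σ) / 2))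
        = (1 - σ) * Real.tan (Real.pi * σ / 2)) ∧
    ContinuousOn PhiFun (Set.Ioc (-1 : ℝ) 1) ∧
    StrictMonoOn PhiFun (Set.Ioc (-1 : ℝ) 1) ∧
    PhiFun 0 = 0 ∧
    (∀ σ ∈ Set.Ioc (-1 : ℝ) 1, PhiFun σ ≤ 2 / Real.pi) ∧
    PhiFun 1 = 2 / Real.pi ∧
    Tendsto PhiFun (𝓝[>] (-1 : ℝ)) atBot := by
  have hPhi_one : PhiFun 1 = 2 / π := if_pos rfl
  refine ⟨fun σ hσ _ => gamma_ratio_eq_one_sub_mul_tan hσ.2.ne, continuousOn_phiFun,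
    strictMonoOn_phiFun, by simp [PhiFun], fun σ hσ => ?_, hPhi_one, ?_⟩
  · exact hPhi_one ▸ strictMonoOn_phiFun.monotoneOn hσ (right_mem_Ioc.2 (by norm_num)) hσ.2
  · refine tendsto_one_sub_mul_tan_atBot.congr' ?_
    exact ((phiFun_eventuallyEq (by norm_num)).filter_mono nhdsWithin_le_nhds).symm

end
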